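/- Let M be a sequential decision-making mechanism, k < n, and s_1 ∈ A_1, …, s_k ∈ A_k be such that there is no t ∈ A_{k+1} with γ(s_1, …, s_k, t, u_{k+2}, …, u_n) = true for all u_{k+2} ∈ A_{k+2}, …, u_n ∈ A_n. Then the following two conditions are equivalent: (1) M_k(s_1, …, s_k) ∈ GDF; (2) M_{k+1}(s_1, …, s_k, s_{k+1}) ∈ GDF for every s_{k+1} ∈ A_{k+1}. -/

import Mathlib

/-- A sequential decision-making mechanism: `n` agents, finite nonempty
action sets `A 0, …, A (n-1)` (agents act in the order of their indices),
and a deontic constraint `γ` on action profiles. -/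
structure Mech where
  n : ℕ
  A : Fin n → Type
  fin : ∀ i, Finite (A i)
  ne : ∀ i, Nonempty (A i)
  γ : (∀ i, A i) → Bool

namespace Mech

/-- An action profile. -/
abbrev Profile (M : Mech) : Type := ∀ i, M.A i

/-- Agent `i` is responsible under profile `s`: the deontic constraint is
violated, and agent `i` had an action `t` that, given the actions of the
agents before it, would have guaranteed the constraint no matter what the
later agents do. -/
def Responsible (M : Mech) (s : M.Profile) (i : Fin M.n) : Prop :=
  M.γ s = false ∧ ∃ t : M.A i, ∀ s' : M.Profile,
    (∀ j, j < i → s' j = s j) → s' i = t → M.γ s' = true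

/-- `cf_i(s_1, …, s_{i-1})`: agent `i` has an action guaranteeing the
constraint, given the prefix of `s` before `i`. -/
def Cf (M : Mech) (s : M.Profile) (i : Fin M.n) : Prop :=
  ∃ t : M.A i, ∀ s' : M.Profile,
    (∀ j, j < i → s' j = s j) → s' i = t → M.γ s' = true

/-- Diffusion-free: at most one responsible agent whenever `γ` is violated. -/
def DF (M : Mech) : Prop :=
  ∀ s : M.Profile, M.γ s = false →
    ∀ i j, M.Responsible s i → M.Responsible s j → i = j

/-- Gap-free: at least one responsible agent whenever `γ` is violated. -/
def GF (M : Mech) : Prop :=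
  ∀ s : M.Profile, M.γ s = false → ∃ i, M.Responsible s i

/-- Gap-and-diffusion-free: exactly one responsible agent whenever `γ` is violated. -/
def GDF (M : Mech) : Prop :=
  ∀ s : M.Profile, M.γ s = false → ∃! i, M.Responsible s i

/-- Responsibility-free: no agent is responsible under any profile. -/
def RF (M : Mech) : Prop :=
  ∀ (s : M.Profile) (i : Fin M.n), ¬ M.Responsible s i

/-- Agent `j` of the partial mechanism `M_k` as an agent of `M`. -/
def shift (M : Mech) (k : ℕ) (h : k ≤ M.n) (j : Fin (M.n - k)) : Fin M.n :=
  ⟨k + j.val, by omega⟩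

/-- Combine a prefix of `s` (first `k` actions) with actions `u` of
agents `k+1, …, n` into a full profile. -/
def glue (M : Mech) (k : ℕ) (h : k ≤ M.n) (s : M.Profile)
    (u : ∀ j : Fin (M.n - k), M.A (M.shift k h j)) : M.Profile := fun i =>
  if hi : i.val < k then s i
  else
    have hj : i.val - k < M.n - k := by omega
    have he : M.shift k h ⟨i.val - k, hj⟩ = i := Fin.ext (by
      show k + (i.val - k) = i.val
      omega)
    he ▸ u ⟨i.val - k, hj⟩

/-- The partial mechanism `M_k(s_1, …, s_k)`: the first `k` agents have
already acted according to `s`. -/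
def part (M : Mech) (k : ℕ) (h : k ≤ M.n) (s : M.Profile) : Mech where
  n := M.n - k
  A := fun j => M.A (M.shift k h j)
  fin := fun _ => M.fin _
  ne := fun _ => M.ne _
  γ := fun u => M.γ (M.glue k h s u)

/-- The restriction of a profile of `M` to a profile of `M_k(s_1, …, s_k)`. -/
def restrict (M : Mech) (k : ℕ) (h : k ≤ M.n) (s : M.Profile) :
    (M.part k h s).Profile :=
  fun j => s (M.shift k h j)


lemma shift_val (M : Mech) (k : ℕ) (h : k ≤ M.n) (j : Fin (M.n - k)) :
    (M.shift k h j).val = k + j.val := rfl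

lemma glue_lt (M : Mech) (k : ℕ) (h : k ≤ M.n) (s : M.Profile)
    (u : (M.part k h s).Profile) {i : Fin M.n}
    (hi : i.val < k) : M.glue k h s u i = s i := by
  simp [Mech.glue, hi]

lemma glue_shift (M : Mech) (k : ℕ) (h : k ≤ M.n) (s : M.Profile)
    (u : (M.part k h s).Profile) (j : Fin (M.n - k)) :
    M.glue k h s u (M.shift k h j) = u j := by
  have hni : ¬ (M.shift k h j).val < k := by simp [Mech.shift]
  have h1 : HEq (M.glue k h s u (M.shift k h j))
      (u ⟨(M.shift k h j).val - k, by have hjl : j.val < M.n - k := j.isLt; show k + j.val - k < M.n - k; omega⟩) := by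
    simp only [Mech.glue, dif_neg hni]
    exact eqRec_heq _ _
  have h2 : (⟨(M.shift k h j).val - k, by have hjl : j.val < M.n - k := j.isLt; show k + j.val - k < M.n - k; omega⟩ : Fin (M.n - k)) = j :=
    Fin.ext (by simp [Mech.shift])
  erw [h2] at h1
  exact eq_of_heq h1

lemma glue_restrict (M : Mech) (k : ℕ) (h : k ≤ M.n) (s : M.Profile) (s' : M.Profile)
    (hs : ∀ j : Fin M.n, j.val < k → s' j = s j) :
    M.glue k h s (M.restrict k h s') = s' := by
  funext i
  by_cases hi : i.val < k
  · erw [M.glue_lt k h s _ hi]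
    exact (hs i hi).symm
  · have hj : i.val - k < M.n - k := by omega
    have : i = M.shift k h ⟨i.val - k, hj⟩ := Fin.ext (by simp [Mech.shift]; omega)
    erw [this, M.glue_shift k h s _ ⟨i.val - k, hj⟩]
    rfl


lemma resp_iff (M : Mech) (k : ℕ) (h : k ≤ M.n) (s : M.Profile)
    (u : (M.part k h s).Profile) (j : Fin (M.n - k)) :
    (M.part k h s).Responsible u j ↔
      M.Responsible (M.glue k h s u) (M.shift k h j) := by
  constructor
  · rintro ⟨hγ, t, ht⟩
    refine ⟨hγ, t, ?_⟩
    intro s'' hpre hval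
    have hsk : ∀ i : Fin M.n, i.val < k → s'' i = s i := by
      intro i hi
      have hlt : i < M.shift k h j := by
        rw [Fin.lt_def]; show i.val < k + j.val; omega
      rw [hpre i hlt, M.glue_lt k h s u hi]
    have hgr := M.glue_restrict k h s s'' hsk
    rw [← hgr]
    refine ht (M.restrict k h s'') ?_ ?_
    · intro j' hj'
      show s'' (M.shift k h j') = u j'
      have hlt : M.shift k h j' < M.shift k h j := by
        rw [Fin.lt_def]; show k + j'.val < k + j.val
        have : j'.val < j.val := hj'
        omega
      erw [hpre _ hlt, M.glue_shift]
    · show s'' (M.shift k h j) = t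
      exact hval
  · rintro ⟨hγ, t, ht⟩
    refine ⟨hγ, t, ?_⟩
    intro u' hpre hval
    show M.γ (M.glue k h s u') = true
    refine ht (M.glue k h s u') ?_ ?_
    · intro i hij
      have hijv : i.val < k + j.val := hij
      by_cases hi : i.val < k
      · rw [M.glue_lt k h s u' hi, M.glue_lt k h s u hi]
      · have hjb : i.val - k < M.n - k := by
          have := j.isLt
          have hjl : j.val < M.n - k := j.isLt
          omega
        have hieq : i = M.shift k h ⟨i.val - k, hjb⟩ :=
          Fin.ext (by show i.val = k + (i.val - k); omega)
        have hlt : (⟨i.val - k, hjb⟩ : Fin (M.n - k)) < j := by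
          show i.val - k < j.val; omega
        rw [hieq, M.glue_shift, M.glue_shift, hpre _ hlt]
    · rw [M.glue_shift]; exact hval

lemma part_GDF_iff' (M : Mech) (k : ℕ) (h : k ≤ M.n) (s : M.Profile) :
    (M.part k h s).GDF ↔ ∀ s' : M.Profile, (∀ j : Fin M.n, j.val < k → s' j = s j) →
      M.γ s' = false → ∃ i : Fin M.n, (k ≤ i.val ∧ M.Responsible s' i) ∧
        ∀ i' : Fin M.n, k ≤ i'.val → M.Responsible s' i' → i' = i := by
  constructor
  · intro hGDF s' hs hγ
    have hgr := M.glue_restrict k h s s' hs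
    have hγ' : (M.part k h s).γ (M.restrict k h s') = false := by
      show M.γ _ = false; rw [hgr]; exact hγ
    obtain ⟨j, hj, huniq⟩ := hGDF _ hγ'
    refine ⟨M.shift k h j, ⟨by show k ≤ k + j.val; omega, ?_⟩, ?_⟩
    · have := (M.resp_iff k h s _ j).mp hj
      rwa [hgr] at this
    · intro i' hi' hresp'
      have hjb : i'.val - k < M.n - k := by have := i'.isLt; omega
      have hieq : i' = M.shift k h ⟨i'.val - k, hjb⟩ :=
        Fin.ext (by show i'.val = k + (i'.val - k); omega)
      have hr : (M.part k h s).Responsible (M.restrict k h s') ⟨i'.val - k, hjb⟩ := by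
        erw [M.resp_iff k h s _ _, hgr, ← hieq]
        exact hresp'
      erw [hieq, huniq _ hr]
  · intro hG u hγu
    have hs : ∀ j : Fin M.n, j.val < k → M.glue k h s u j = s j :=
      fun j hj => M.glue_lt k h s u hj
    obtain ⟨i, ⟨hik, hresp⟩, huniq⟩ := hG (M.glue k h s u) hs hγu
    have hjb : i.val - k < M.n - k := by have := i.isLt; omega
    have hieq : i = M.shift k h ⟨i.val - k, hjb⟩ :=
      Fin.ext (by show i.val = k + (i.val - k); omega)
    refine ⟨⟨i.val - k, hjb⟩, ?_, ?_⟩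
    · show (M.part k h s).Responsible u ⟨i.val - k, hjb⟩
      erw [M.resp_iff k h s u _, ← hieq]
      exact hresp
    · intro j' hj'
      have hr := (M.resp_iff k h s u j').mp hj'
      have h2 := huniq _ (by show k ≤ k + j'.val; omega) hr
      apply Fin.ext
      have h3 := congrArg Fin.val h2
      have h4 : k + j'.val = i.val := h3
      show j'.val = i.val - k
      omega

end Mech

/-- if agent `k+1` has no action guaranteeing the deontic
constraint given the prefix `s_1, …, s_k`, then `M_k(s_1, …, s_k)` is
gap-and-diffusion-free iff `M_{k+1}(s_1, …, s_k, s_{k+1})` is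
gap-and-diffusion-free for every choice of `s_{k+1}`. -/
theorem part_GDF_iff_GDF (M : Mech) (k : ℕ) (hk : k < M.n) (s : M.Profile)
    (h : ¬ ∃ t : M.A ⟨k, hk⟩, ∀ s' : M.Profile,
      (∀ j : Fin M.n, j.val < k → s' j = s j) → s' ⟨k, hk⟩ = t →
        M.γ s' = true) :
    (M.part k hk.le s).GDF ↔
      ∀ t : M.A ⟨k, hk⟩,
        (M.part (k + 1) hk (Function.update s ⟨k, hk⟩ t)).GDF := by
  rw [M.part_GDF_iff' k hk.le s]
  constructor
  · intro G t
    rw [M.part_GDF_iff' (k + 1) hk (Function.update s ⟨k, hk⟩ t)]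
    intro s' hs' hγ
    have hsk : ∀ j : Fin M.n, j.val < k → s' j = s j := by
      intro j hj
      have h1 := hs' j (by omega)
      rwa [Function.update_of_ne (Fin.ne_of_val_ne (show j.val ≠ k by omega)) t s] at h1
    obtain ⟨i, ⟨hik, hresp⟩, huniq⟩ := G s' hsk hγ
    have hknot : i.val ≠ k := by
      intro hc
      have hieq : i = ⟨k, hk⟩ := Fin.ext hc
      subst hieq
      obtain ⟨_, t', ht'⟩ := hresp
      exact h ⟨t', fun s'' hpre hval =>
        ht' s'' (fun j hj => (hpre j hj).trans (hsk j hj).symm) hval⟩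
    refine ⟨i, ⟨by omega, hresp⟩, fun i' hi' hr' => huniq i' (by omega) hr'⟩
  · intro G s' hs hγ
    have hG := G (s' ⟨k, hk⟩)
    rw [M.part_GDF_iff' (k + 1) hk (Function.update s ⟨k, hk⟩ (s' ⟨k, hk⟩))] at hG
    have hs' : ∀ j : Fin M.n, j.val < k + 1 →
        s' j = Function.update s ⟨k, hk⟩ (s' ⟨k, hk⟩) j := by
      intro j hj
      by_cases hjk : j = ⟨k, hk⟩
      · subst hjk; rw [Function.update_self]
      · rw [Function.update_of_ne hjk]
        exact hs j (by
          have : j.val ≠ k := fun hc => hjk (Fin.ext hc)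
          omega)
    obtain ⟨i, ⟨hik, hresp⟩, huniq⟩ := hG s' hs' hγ
    refine ⟨i, ⟨by omega, hresp⟩, ?_⟩
    intro i' hi' hr'
    have hknot : i'.val ≠ k := by
      intro hc
      have hieq : i' = ⟨k, hk⟩ := Fin.ext hc
      subst hieq
      obtain ⟨_, t', ht'⟩ := hr'
      exact h ⟨t', fun s'' hpre hval =>
        ht' s'' (fun j hj => (hpre j hj).trans (hs j hj).symm) hval⟩
    exact huniq i' (by omega) hr'
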